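/- arXiv:2601.05158 — 2 statements merged into one kernel-verified Lean document; each statement's English description precedes it below -/
import Mathlib

section
/- Let P : M_N(ℂ) → M_N(ℂ) be a linear map with P ∘ P = P, let γ ≥ 0, and let S := {O ∈ M_N(ℂ) : O positive semidefinite, P(O) = O, Tr[O] ≤ γ} be the associated quantum object set. Let {Õ_{a|x}} ⊆ S (a ∈ A, x ∈ X finite) be an assemblage, i.e. Tr[Σ_a Õ_{a|x}] = γ for every x. Then the following are equivalent: (1) there exists Õ ∈ S with Σ_a Õ_{a|x} = Õ for all x (the assemblage is non-signalling); (2) there exist a finite dimension d_A, a family of POVMs {M_{a|x}} on ℂ^{d_A}, and a vector |ω⟩ ∈ ℂ^{d_A} ⊗ ℂ^N such that Ω̃ := |ω⟩⟨ω| satisfies Tr_A[Ω̃] ∈ S (equivalently P(Tr_A[Ω̃]) = Tr_A[Ω̃] and Tr[Ω̃] ≤ γ) and Õ_{a|x} = Tr_A[(M_{a|x} ⊗ 𝟙_N)Ω̃] for all a, x. -/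
/-! A purified assemblage is non-signalling by linearity of the partial trace:
`∑ₐ (M_{a|x} ⊗ 𝟙) Ω̃ = Ω̃` for every `x`. Conversely, diagonalise `Õ = U D U*` and purify it
by `W = √D U*`, so `W* W = Õ`; in general `Tr_A[(M ⊗ 𝟙)|ω⟩⟨ω|] = W* Mᵀ W` when `ω` is the
vectorisation of `W̄`. The positive matrices `U* Õ_{a|x} U` sum to `D`, hence vanish on the rows
and columns where `D` does, so `D^{-1/2} U* Õ_{a|x} U D^{-1/2}`, with the projection onto
`ker D` added to one fixed outcome, is a POVM that `W` sandwiches back to `Õ_{a|x}`. -/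

open Matrix
open scoped Matrix Kronecker ComplexOrder

noncomputable section

/-- Partial trace over the first tensor factor. -/
def ptraceFst {m n : Type*} [Fintype m]
    (W : Matrix (m × n) (m × n) ℂ) : Matrix n n ℂ :=
  fun k l => ∑ i : m, W (i, k) (i, l)

/-- The rank-one projector `|ω⟩⟨ω|`. -/
def outer {n : Type*} (ψ : n → ℂ) : Matrix n n ℂ :=
  Matrix.vecMulVec ψ (star ψ)

/-- A POVM: a family of positive semidefinite matrices summing to the identity. -/
def IsPOVM {n : Type*} [Fintype n] [DecidableEq n] {A : Type*} [Fintype A]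
    (M : A → Matrix n n ℂ) : Prop :=
  (∀ a, (M a).PosSemidef) ∧ ∑ a, M a = 1

/-- Membership in the quantum object set determined by the idempotent linear
map `P` and the normalization constant `γ`. -/
def MemQObj {N : ℕ}
    (P : Matrix (Fin N) (Fin N) ℂ →ₗ[ℂ] Matrix (Fin N) (Fin N) ℂ) (γ : ℝ)
    (O : Matrix (Fin N) (Fin N) ℂ) : Prop :=
  O.PosSemidef ∧ P O = O ∧ O.trace ≤ (γ : ℂ)

lemma Matrix.sum_kronecker {α l m n p ι : Type*} [NonUnitalNonAssocSemiring α] (s : Finset ι)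
    (M : ι → Matrix l m α) (B : Matrix n p α) :
    (∑ a ∈ s, M a) ⊗ₖ B = ∑ a ∈ s, M a ⊗ₖ B := by
  ext i j
  simp only [kroneckerMap_apply, Matrix.sum_apply, Finset.sum_mul]

lemma ptraceFst_kronecker_mul_outer {m n : Type*} [Fintype m] [Fintype n] [DecidableEq n]
    (M : Matrix m m ℂ) (W : Matrix m n ℂ) :
    ptraceFst ((M ⊗ₖ (1 : Matrix n n ℂ)) * outer (fun p => star (W p.1 p.2))) = Wᴴ * Mᵀ * W := by
  ext k l
  simp only [ptraceFst, mul_apply, kroneckerMap_apply, outer, vecMulVec_apply, Pi.star_apply,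
    star_star, one_apply, conjTranspose_apply, transpose_apply, Fintype.sum_prod_type, mul_ite,
    mul_one, mul_zero, ite_mul, zero_mul, Finset.sum_ite_eq, Finset.mem_univ, if_true,
    Finset.sum_mul]
  exact Finset.sum_congr rfl fun i _ => Finset.sum_congr rfl fun j _ => by ring

lemma ptraceFst_outer {m n : Type*} [Fintype m] [Fintype n] [DecidableEq n]
    (W : Matrix m n ℂ) : ptraceFst (outer (fun p => star (W p.1 p.2))) = Wᴴ * W := by
  classical
  simpa using ptraceFst_kronecker_mul_outer (1 : Matrix m m ℂ) W

lemma ptraceFst_sum {m n ι : Type*} [Fintype m] (s : Finset ι)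
    (W : ι → Matrix (m × n) (m × n) ℂ) :
    ptraceFst (∑ a ∈ s, W a) = ∑ a ∈ s, ptraceFst (W a) := by
  ext k l
  simp only [ptraceFst, Matrix.sum_apply]
  exact Finset.sum_comm

lemma sum_ptraceFst_kronecker_mul {m n A : Type*} [Fintype m] [DecidableEq m] [Fintype n]
    [DecidableEq n] [Fintype A] {M : A → Matrix m m ℂ} (hM : ∑ a, M a = 1)
    (Ω : Matrix (m × n) (m × n) ℂ) :
    ∑ a, ptraceFst ((M a ⊗ₖ (1 : Matrix n n ℂ)) * Ω) = ptraceFst Ω := by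
  rw [← ptraceFst_sum, ← Finset.sum_mul, ← sum_kronecker, hM, one_kronecker_one, one_mul]

namespace Matrix.PosSemidef

variable {𝕜 n : Type*} [RCLike 𝕜]

lemma apply_eq_zero_of_diag_eq_zero [Fintype n] {A : Matrix n n 𝕜} (hA : A.PosSemidef) {i : n}
    (hi : A i i = 0) (j : n) : A j i = 0 ∧ A i j = 0 := by
  classical
  have hcol : A *ᵥ Pi.single i 1 = 0 :=
    (hA.dotProduct_mulVec_zero_iff _).1 (by simp [hi])
  have hji : A j i = 0 := by simpa using congrFun hcol j
  exact ⟨hji, by rw [← hA.1.apply, hji, star_zero]⟩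

lemma diag_eq_zero_of_sum {ι : Type*} [Fintype ι] {B : ι → Matrix n n 𝕜}
    (hB : ∀ a, (B a).PosSemidef) {i : n} (hi : (∑ a, B a) i i = 0) (a : ι) : B a i i = 0 := by
  rw [Matrix.sum_apply] at hi
  exact (Finset.sum_eq_zero_iff_of_nonneg fun a _ => (hB a).diag_nonneg).1 hi a
    (Finset.mem_univ a)

end Matrix.PosSemidef

lemma exists_isPOVM_diagonal_sqrt_mul_mul {n A : Type*} [Fintype n] [DecidableEq n] [Fintype A]
    [Nonempty A] {d : n → ℝ} (hd : 0 ≤ d) {C : A → Matrix n n ℂ} (hC : ∀ a, (C a).PosSemidef)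
    (hsum : ∑ a, C a = diagonal (fun i => (d i : ℂ))) :
    ∃ Q : A → Matrix n n ℂ, IsPOVM Q ∧
      ∀ a, diagonal (fun i => (√(d i) : ℂ)) * Q a * diagonal (fun i => (√(d i) : ℂ)) = C a := by
  classical
  obtain ⟨a₀⟩ := ‹Nonempty A›
  -- `(√0)⁻¹ = 0`, so `Dinv` is the pseudo-inverse of `√D`.
  set Dinv : Matrix n n ℂ := diagonal fun i => ((√(d i))⁻¹ : ℝ)
  set K : Matrix n n ℂ := diagonal fun i => if d i = 0 then 1 else 0
  have hsq : ∀ k, d k ≠ 0 → (√(d k) : ℂ) ≠ 0 := fun k hk =>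
    Complex.ofReal_ne_zero.2 (Real.sqrt_ne_zero'.2 ((hd k).lt_of_ne' hk))
  have hDinv : Dinvᴴ = Dinv := by simp [Dinv, diagonal_conjTranspose]
  have hK : K.PosSemidef := posSemidef_diagonal_iff.2 fun i => by split_ifs <;> norm_num
  have hsupp : ∀ a i j, d i = 0 ∨ d j = 0 → C a i j = 0 := by
    intro a i j hij
    have hdiag : ∀ k, d k = 0 → C a k k = 0 := fun k hk =>
      PosSemidef.diag_eq_zero_of_sum hC (by simp [hsum, hk]) a
    rcases hij with hi | hj
    · exact ((hC a).apply_eq_zero_of_diag_eq_zero (hdiag i hi) j).2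
    · exact ((hC a).apply_eq_zero_of_diag_eq_zero (hdiag j hj) i).1
  refine ⟨fun a => Dinv * C a * Dinv + if a = a₀ then K else 0, ⟨fun a => ?_, ?_⟩, fun a => ?_⟩
  · refine .add (by simpa only [hDinv] using (hC a).mul_mul_conjTranspose_same Dinv) ?_
    split_ifs
    exacts [hK, .zero]
  · rw [Finset.sum_add_distrib, ← Finset.sum_mul, ← Finset.mul_sum, hsum, Finset.sum_ite_eq']
    simp only [Dinv, K, diagonal_mul_diagonal, Finset.mem_univ, if_true, diagonal_add,
      ← diagonal_one]
    congr 1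
    funext i
    by_cases hi : d i = 0
    · simp [hi]
    · have : (d i : ℂ) = √(d i) * √(d i) := by exact_mod_cast (Real.mul_self_sqrt (hd i)).symm
      simp [hi, this]
      field_simp [hsq i hi]
  · ext i j
    by_cases hij : d i = 0 ∨ d j = 0
    · rcases hij with hi | hj <;> simp [*]
    obtain ⟨hi, hj⟩ : d i ≠ 0 ∧ d j ≠ 0 := not_or.1 hij
    have hKij : (if a = a₀ then K else 0) i j = 0 := by
      split_ifs <;> simp [K, diagonal_apply, hi]
    simp [Dinv, diagonal_mul, mul_diagonal, hKij]
    field_simp [hsq i hi, hsq j hj]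

namespace Matrix.PosSemidef

variable {n : Type*} [Fintype n] [DecidableEq n] {O : Matrix n n ℂ}

def sqrtFactor (hO : O.PosSemidef) : Matrix n n ℂ :=
  diagonal (fun i => (√(hO.1.eigenvalues i) : ℂ)) * star (hO.1.eigenvectorUnitary : Matrix n n ℂ)

lemma conjTranspose_sqrtFactor (hO : O.PosSemidef) :
    hO.sqrtFactorᴴ = (hO.1.eigenvectorUnitary : Matrix n n ℂ) *
      diagonal (fun i => (√(hO.1.eigenvalues i) : ℂ)) := by
  simp [sqrtFactor, conjTranspose_mul, diagonal_conjTranspose, star_eq_conjTranspose, Pi.star_def]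

lemma conjTranspose_sqrtFactor_mul_self (hO : O.PosSemidef) :
    hO.sqrtFactorᴴ * hO.sqrtFactor = O := by
  have hev : ∀ i, (√(hO.1.eigenvalues i) : ℂ) * √(hO.1.eigenvalues i) = hO.1.eigenvalues i :=
    fun i => by exact_mod_cast Real.mul_self_sqrt (hO.eigenvalues_nonneg i)
  conv_rhs => rw [hO.1.spectral_theorem, Unitary.conjStarAlgAut_apply]
  rw [conjTranspose_sqrtFactor, sqrtFactor, Matrix.mul_assoc, ← Matrix.mul_assoc (diagonal _),
    diagonal_mul_diagonal, Matrix.mul_assoc]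
  simp [hev, Function.comp_def]

lemma exists_isPOVM_conj_sqrtFactor {A : Type*} [Fintype A] [Nonempty A] (hO : O.PosSemidef)
    {B : A → Matrix n n ℂ} (hB : ∀ a, (B a).PosSemidef) (hsum : ∑ a, B a = O) :
    ∃ Q : A → Matrix n n ℂ, IsPOVM Q ∧ ∀ a, hO.sqrtFactorᴴ * Q a * hO.sqrtFactor = B a := by
  set U := (hO.1.eigenvectorUnitary : Matrix n n ℂ)
  have hUU : U * star U = 1 := Unitary.coe_mul_star_self _
  have hC : ∀ a, (star U * B a * U).PosSemidef := fun a => by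
    simpa [star_eq_conjTranspose] using (hB a).conjTranspose_mul_mul_same U
  have hCsum : ∑ a, star U * B a * U = diagonal (fun i => (hO.1.eigenvalues i : ℂ)) := by
    rw [← Finset.sum_mul, ← Finset.mul_sum, hsum]
    simpa [Function.comp_def] using hO.1.conjStarAlgAut_star_eigenvectorUnitary
  obtain ⟨Q, hQ, hQC⟩ := exists_isPOVM_diagonal_sqrt_mul_mul hO.eigenvalues_nonneg hC hCsum
  refine ⟨Q, hQ, fun a => ?_⟩
  calc hO.sqrtFactorᴴ * Q a * hO.sqrtFactor
      = U * (diagonal (fun i => (√(hO.1.eigenvalues i) : ℂ)) * Q a *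
          diagonal (fun i => (√(hO.1.eigenvalues i) : ℂ))) * star U := by
        rw [conjTranspose_sqrtFactor, sqrtFactor]
        simp only [Matrix.mul_assoc]
        rfl
    _ = B a := by
        rw [hQC, ← Matrix.mul_assoc, ← Matrix.mul_assoc, hUU, Matrix.one_mul, Matrix.mul_assoc,
          hUU, Matrix.mul_one]

end Matrix.PosSemidef

lemma IsPOVM.transpose {n A : Type*} [Fintype n] [DecidableEq n] [Fintype A]
    {M : A → Matrix n n ℂ} (hM : IsPOVM M) : IsPOVM fun a => (M a)ᵀ :=
  ⟨fun a => (hM.1 a).transpose, by rw [← transpose_sum, hM.2, transpose_one]⟩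

lemma MemQObj.zero {N : ℕ} {P : Matrix (Fin N) (Fin N) ℂ →ₗ[ℂ] Matrix (Fin N) (Fin N) ℂ} {γ : ℝ}
    {O : Matrix (Fin N) (Fin N) ℂ} (hO : MemQObj P γ O) : MemQObj P γ 0 :=
  ⟨.zero, map_zero P, by simpa using hO.1.trace_nonneg.trans hO.2.2⟩

theorem sghjw_quantum_objects_general {N : ℕ} {A X : Type} [Fintype A]
    (P : Matrix (Fin N) (Fin N) ℂ →ₗ[ℂ] Matrix (Fin N) (Fin N) ℂ)
    (γ : ℝ)
    (O : A → X → Matrix (Fin N) (Fin N) ℂ)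
    (hmem : ∀ a x, MemQObj P γ (O a x)) :
    (∃ O₀, MemQObj P γ O₀ ∧ ∀ x, ∑ a, O a x = O₀)
    ↔
    (∃ (dA : ℕ) (M : A → X → Matrix (Fin dA) (Fin dA) ℂ)
        (ω : Fin dA × Fin N → ℂ),
      (∀ x, IsPOVM (fun a => M a x)) ∧
      MemQObj P γ (ptraceFst (outer ω)) ∧
      (∀ a x, O a x =
        ptraceFst ((M a x ⊗ₖ (1 : Matrix (Fin N) (Fin N) ℂ)) * outer ω))) := by
  constructor
  · rintro ⟨O₀, hO₀, hsum⟩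
    rcases isEmpty_or_nonempty A with hA | hA
    · refine ⟨0, fun _ _ => 0, 0, fun _ => ⟨isEmptyElim, Subsingleton.elim _ _⟩, ?_, isEmptyElim⟩
      have hΩ : ptraceFst (outer (0 : Fin 0 × Fin N → ℂ)) = 0 := by ext; simp [ptraceFst]
      exact hΩ ▸ hO₀.zero
    · set W := hO₀.1.sqrtFactor
      choose Q hQ hQW using fun x =>
        hO₀.1.exists_isPOVM_conj_sqrtFactor (fun a => (hmem a x).1) (hsum x)
      refine ⟨N, fun a x => (Q x a)ᵀ, fun p => star (W p.1 p.2), fun x => (hQ x).transpose,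
        ?_, fun a x => ?_⟩
      · rwa [ptraceFst_outer, hO₀.1.conjTranspose_sqrtFactor_mul_self]
      · rw [ptraceFst_kronecker_mul_outer, transpose_transpose, hQW]
  · rintro ⟨dA, M, ω, hM, hΩ, hO⟩
    exact ⟨_, hΩ, fun x => by simp only [hO, sum_ptraceFst_kronecker_mul (hM x).2]⟩

/-- simultaneous purification for assemblages of arbitrary
quantum objects: an assemblage of quantum objects is non-signalling iff it
arises from a pure extended quantum object and measurements on the auxiliary
factor. -/
theorem sghjw_quantum_objects {N : ℕ} {A X : Type} [Fintype A] [Fintype X]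
    (P : Matrix (Fin N) (Fin N) ℂ →ₗ[ℂ] Matrix (Fin N) (Fin N) ℂ)
    (hP : ∀ O, P (P O) = P O)
    (γ : ℝ) (hγ : 0 ≤ γ)
    (O : A → X → Matrix (Fin N) (Fin N) ℂ)
    (hmem : ∀ a x, MemQObj P γ (O a x))
    (hassem : ∀ x, (∑ a, O a x).trace = (γ : ℂ)) :
    (∃ O₀, MemQObj P γ O₀ ∧ ∀ x, ∑ a, O a x = O₀)
    ↔
    (∃ (dA : ℕ) (M : A → X → Matrix (Fin dA) (Fin dA) ℂ)
        (ω : Fin dA × Fin N → ℂ),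
      (∀ x, IsPOVM (fun a => M a x)) ∧
      MemQObj P γ (ptraceFst (outer ω)) ∧
      (∀ a x, O a x =
        ptraceFst ((M a x ⊗ₖ (1 : Matrix (Fin N) (Fin N) ℂ)) * outer ω))) :=
  sghjw_quantum_objects_general P γ O hmem

end
end

section
/- Let {ρ_{a|x}} be an unsteerable state assemblage on ℂ^{d_1}, i.e. ρ_{a|x} = Σ_λ p(λ) p(a|x,λ) σ_λ with p a probability distribution on a finite set Λ, p(·|x,λ) conditional distributions, and σ_λ density matrices. Let {I_{b|y}} be an unsteerable instrument assemblage from M_{d_1}(ℂ) to M_{d_2}(ℂ), i.e. I_{b|y} = Σ_μ q(μ) q(b|y,μ) Λ_μ with q a probability distribution on a finite set M, q(·|y,μ) conditional distributions, and Λ_μ completely positive trace-preserving maps. Let {N_{c|z}} be a family of POVMs on ℂ^{d_2}. Then the correlations p(a,b,c|x,y,z) := Tr[N_{c|z} I_{b|y}(ρ_{a|x})] admit a tripartite Bell local model: setting r(c|z,λ,μ) := Tr[N_{c|z} Λ_μ(σ_λ)], one has p(a,b,c|x,y,z) = Σ_{λ,μ} p(λ) q(μ) p(a|x,λ) q(b|y,μ)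 r(c|z,λ,μ), where each r(·|z,λ,μ) is a probability distribution. -/
open Matrix
open scoped Matrix ComplexOrder

noncomputable section

/-- The Choi matrix `∑_{i,j} E_{ij} ⊗ Φ(E_{ij})` of a linear map on matrices. -/
def choi {dI dO : ℕ}
    (Φ : Matrix (Fin dI) (Fin dI) ℂ →ₗ[ℂ] Matrix (Fin dO) (Fin dO) ℂ) :
    Matrix (Fin dI × Fin dO) (Fin dI × Fin dO) ℂ :=
  fun p q => Φ (Matrix.single p.1 q.1 1) p.2 q.2

/-- Complete positivity, characterized via the Choi matrix. -/
def IsCP {dI dO : ℕ}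
    (Φ : Matrix (Fin dI) (Fin dI) ℂ →ₗ[ℂ] Matrix (Fin dO) (Fin dO) ℂ) : Prop :=
  (choi Φ).PosSemidef

/-- Trace preservation. -/
def IsTP {dI dO : ℕ}
    (Φ : Matrix (Fin dI) (Fin dI) ℂ →ₗ[ℂ] Matrix (Fin dO) (Fin dO) ℂ) : Prop :=
  ∀ ρ : Matrix (Fin dI) (Fin dI) ℂ, (Φ ρ).trace = ρ.trace

/-! Both assemblages enter `Tr[N I(ρ)]` linearly, so expanding `ρ` over `λ` and `I` over `μ`
gives the local model with response `r(c|z,λ,μ) = Tr[N_{c|z} Λ_μ(σ_λ)]`. This `r` is a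
probability distribution because `Λ_μ(σ_λ)` is again a density matrix (trace preservation, and
positivity from the Choi matrix: `Φ(BᴴB)` is a sum of compressions of `choi Φ`), and the trace of
a product of two positive semidefinite matrices is nonnegative. -/

namespace Matrix.PosSemidef

variable {n : Type*} [Fintype n]

open scoped MatrixOrder in
lemma exists_eq_conjTranspose_mul_self {A : Matrix n n ℂ} (hA : A.PosSemidef) :
    ∃ B : Matrix n n ℂ, A = Bᴴ * B := by
  classical
  exact CStarAlgebra.nonneg_iff_eq_star_mul_self.mp hA.nonneg

lemma trace_mul_nonneg {A B : Matrix n n ℂ} (hA : A.PosSemidef) (hB : B.PosSemidef) :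
    0 ≤ (A * B).trace := by
  obtain ⟨C, rfl⟩ := hA.exists_eq_conjTranspose_mul_self
  rw [mul_assoc, trace_mul_comm]
  exact (hB.mul_mul_conjTranspose_same C).trace_nonneg

end Matrix.PosSemidef

lemma IsPOVM.sum_trace_mul {n : Type*} [Fintype n] [DecidableEq n] {A : Type*} [Fintype A]
    {E : A → Matrix n n ℂ} (hE : IsPOVM E) (X : Matrix n n ℂ) :
    ∑ a, (E a * X).trace = X.trace := by
  rw [← trace_sum, ← Finset.sum_mul, hE.2, one_mul]

section Choi

variable {dI dO : ℕ} (Φ : Matrix (Fin dI) (Fin dI) ℂ →ₗ[ℂ] Matrix (Fin dO) (Fin dO) ℂ)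

lemma map_apply_eq_sum_choi (X : Matrix (Fin dI) (Fin dI) ℂ) (p q : Fin dO) :
    Φ X p q = ∑ i, ∑ j, X i j * choi Φ (i, p) (j, q) := by
  conv_lhs => rw [matrix_eq_sum_single X]
  simp only [map_sum, Matrix.sum_apply]
  refine Finset.sum_congr rfl fun i _ => Finset.sum_congr rfl fun j _ => ?_
  have hsingle : single i j (X i j) = X i j • single i j 1 := by
    rw [smul_single, smul_eq_mul, mul_one]
  rw [hsingle, LinearMap.map_smul, Matrix.smul_apply, smul_eq_mul, choi]

/-- `Φ (Bᴴ B)` is a sum of compressions of the Choi matrix, by the isometries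
`|q⟩ ↦ ∑ⱼ B_{kj} |j⟩ ⊗ |q⟩`. -/
lemma map_conjTranspose_mul_self_eq_sum_choi (B : Matrix (Fin dI) (Fin dI) ℂ) :
    Φ (Bᴴ * B) = ∑ k, (of fun (jq : Fin dI × Fin dO) (q : Fin dO) =>
        B k jq.1 * (1 : Matrix (Fin dO) (Fin dO) ℂ) jq.2 q)ᴴ * choi Φ *
      of fun (jq : Fin dI × Fin dO) (q : Fin dO) =>
        B k jq.1 * (1 : Matrix (Fin dO) (Fin dO) ℂ) jq.2 q := by
  ext p q
  simp only [map_apply_eq_sum_choi, Matrix.sum_apply, mul_apply, conjTranspose_apply, of_apply,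
    Fintype.sum_prod_type, one_apply, Finset.sum_mul, apply_ite star, star_zero, mul_ite,
    mul_one, mul_zero, ite_mul, zero_mul, Finset.sum_ite_eq', Finset.mem_univ, if_true]
  rw [Finset.sum_comm_cycle]
  refine Finset.sum_congr rfl fun k _ => ?_
  rw [Finset.sum_comm]
  exact Finset.sum_congr rfl fun _ _ => Finset.sum_congr rfl fun _ _ => by ring

end Choi

lemma IsCP.posSemidef_apply {dI dO : ℕ}
    {Φ : Matrix (Fin dI) (Fin dI) ℂ →ₗ[ℂ] Matrix (Fin dO) (Fin dO) ℂ} (hΦ : IsCP Φ)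
    {X : Matrix (Fin dI) (Fin dI) ℂ} (hX : X.PosSemidef) : (Φ X).PosSemidef := by
  obtain ⟨B, rfl⟩ := hX.exists_eq_conjTranspose_mul_self
  rw [map_conjTranspose_mul_self_eq_sum_choi]
  exact posSemidef_sum _ fun k _ => hΦ.conjTranspose_mul_mul_same _

lemma trace_mul_sum_smul_apply_sum_smul {m n ι κ : Type*} [Fintype n] [Fintype ι] [Fintype κ]
    (E : Matrix n n ℂ) (w : κ → ℂ) (Φ : κ → Matrix m m ℂ →ₗ[ℂ] Matrix n n ℂ) (v : ι → ℂ)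
    (σ : ι → Matrix m m ℂ) :
    (E * (∑ k, w k • Φ k) (∑ i, v i • σ i)).trace
      = ∑ i, ∑ k, v i * w k * (E * Φ k (σ i)).trace := by
  simp only [LinearMap.sum_apply, LinearMap.smul_apply, map_sum, LinearMap.map_smul,
    Matrix.mul_smul, trace_sum, trace_smul, smul_eq_mul, Finset.mul_sum]
  exact Finset.sum_congr rfl fun _ _ => Finset.sum_congr rfl fun _ _ => by ring

theorem unsteerable_sequential_gives_local_general {d₁ d₂ : ℕ}
    {A X B Y C Z Λ M : Type}
    [Fintype C] [Fintype Λ] [Fintype M]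
    (ρ : A → X → Matrix (Fin d₁) (Fin d₁) ℂ)
    (p : Λ → ℝ)
    (pc : A → X → Λ → ℝ)
    (σ : Λ → Matrix (Fin d₁) (Fin d₁) ℂ)
    (hσpsd : ∀ l, (σ l).PosSemidef) (hσtr : ∀ l, (σ l).trace = 1)
    (hρdecomp : ∀ a x, ρ a x = ∑ l, ((p l : ℂ) * (pc a x l : ℂ)) • σ l)
    (I : B → Y → (Matrix (Fin d₁) (Fin d₁) ℂ →ₗ[ℂ] Matrix (Fin d₂) (Fin d₂) ℂ))
    (q : M → ℝ)
    (qc : B → Y → M → ℝ)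
    (Φ : M → (Matrix (Fin d₁) (Fin d₁) ℂ →ₗ[ℂ] Matrix (Fin d₂) (Fin d₂) ℂ))
    (hΦCP : ∀ m, IsCP (Φ m)) (hΦTP : ∀ m, IsTP (Φ m))
    (hIdecomp : ∀ b y, I b y = ∑ m, ((q m : ℂ) * (qc b y m : ℂ)) • Φ m)
    (N : C → Z → Matrix (Fin d₂) (Fin d₂) ℂ)
    (hN : ∀ z, IsPOVM (fun c => N c z)) :
    -- each `r(·|z,λ,μ) := Tr[N_{·|z} Λ_μ(σ_λ)]` is a probability distribution …
    (∀ c z l m, 0 ≤ (N c z * Φ m (σ l)).trace) ∧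
    (∀ z l m, ∑ c, (N c z * Φ m (σ l)).trace = 1) ∧
    -- … and the correlations admit a tripartite Bell local model
    (∀ a b c x y z,
      (N c z * I b y (ρ a x)).trace
        = ∑ l, ∑ m,
            (p l : ℂ) * (q m : ℂ) * (pc a x l : ℂ) * (qc b y m : ℂ)
              * (N c z * Φ m (σ l)).trace) := by
  refine ⟨fun c z l m => ?_, fun z l m => ?_, fun a b c x y z => ?_⟩
  · exact ((hN z).1 c).trace_mul_nonneg ((hΦCP m).posSemidef_apply (hσpsd l))
  · rw [(hN z).sum_trace_mul, hΦTP m, hσtr l]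
  · rw [hIdecomp, hρdecomp, trace_mul_sum_smul_apply_sum_smul]
    exact Finset.sum_congr rfl fun _ _ => Finset.sum_congr rfl fun _ _ => by ring

/-- prepare-transform-measure correlations generated by an
unsteerable state assemblage and an unsteerable instrument assemblage admit a
tripartite Bell local model, with `r(c|z,λ,μ) = Tr[N_{c|z} Λ_μ(σ_λ)]`. -/
theorem unsteerable_sequential_gives_local {d₁ d₂ : ℕ}
    {A X B Y C Z Λ M : Type} [Fintype A] [Fintype X] [Fintype B] [Fintype Y]
    [Fintype C] [Fintype Z] [Fintype Λ] [Fintype M]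
    (ρ : A → X → Matrix (Fin d₁) (Fin d₁) ℂ)
    (p : Λ → ℝ) (hp0 : ∀ l, 0 ≤ p l) (hp1 : ∑ l, p l = 1)
    (pc : A → X → Λ → ℝ) (hpc0 : ∀ a x l, 0 ≤ pc a x l)
    (hpc1 : ∀ x l, ∑ a, pc a x l = 1)
    (σ : Λ → Matrix (Fin d₁) (Fin d₁) ℂ)
    (hσpsd : ∀ l, (σ l).PosSemidef) (hσtr : ∀ l, (σ l).trace = 1)
    (hρdecomp : ∀ a x, ρ a x = ∑ l, ((p l : ℂ) * (pc a x l : ℂ)) • σ l)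
    (I : B → Y → (Matrix (Fin d₁) (Fin d₁) ℂ →ₗ[ℂ] Matrix (Fin d₂) (Fin d₂) ℂ))
    (q : M → ℝ) (hq0 : ∀ m, 0 ≤ q m) (hq1 : ∑ m, q m = 1)
    (qc : B → Y → M → ℝ) (hqc0 : ∀ b y m, 0 ≤ qc b y m)
    (hqc1 : ∀ y m, ∑ b, qc b y m = 1)
    (Φ : M → (Matrix (Fin d₁) (Fin d₁) ℂ →ₗ[ℂ] Matrix (Fin d₂) (Fin d₂) ℂ))
    (hΦCP : ∀ m, IsCP (Φ m)) (hΦTP : ∀ m, IsTP (Φ m))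
    (hIdecomp : ∀ b y, I b y = ∑ m, ((q m : ℂ) * (qc b y m : ℂ)) • Φ m)
    (N : C → Z → Matrix (Fin d₂) (Fin d₂) ℂ)
    (hN : ∀ z, IsPOVM (fun c => N c z)) :
    -- each `r(·|z,λ,μ) := Tr[N_{·|z} Λ_μ(σ_λ)]` is a probability distribution …
    (∀ c z l m, 0 ≤ (N c z * Φ m (σ l)).trace) ∧
    (∀ z l m, ∑ c, (N c z * Φ m (σ l)).trace = 1) ∧
    -- … and the correlations admit a tripartite Bell local model
    (∀ a b c x y z,
      (N c z * I b y (ρ a x)).trace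
        = ∑ l, ∑ m,
            (p l : ℂ) * (q m : ℂ) * (pc a x l : ℂ) * (qc b y m : ℂ)
              * (N c z * Φ m (σ l)).trace) :=
  unsteerable_sequential_gives_local_general ρ p pc σ hσpsd hσtr hρdecomp I q qc Φ hΦCP hΦTP
    hIdecomp N hN

end
end
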